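/- Let n ∈ ℕ, N = 2^n, let H be an N×N upper-triangular matrix over 𝔽₂ (i.e., H_{m,j} = 0 whenever m > j), and let 𝒜ᶜ ⊆ {0,…,N−1}. Suppose u ∈ 𝔽₂^N satisfies u·H = 0. Fix i ∈ {0,…,N−1} and t ∈ {1,…,n}, and set x_i^{(t)} = u_{𝒯(i,t)}·F^{⊗t} ∈ 𝔽₂^{2^t}, where u_{𝒯(i,t)} is the subvector of u with indices in 𝒯(i,t). Then u_0^{i−1}·H_{0:i−1, ℒ_{i,t}} + x_i^{(t)}·Q^{(i,t)} = 0 over 𝔽₂, where Q^{(i,t)} = (F^{⊗t})_{*, −s(i,t)+𝒯'(i,t)}·H_{𝒯'(i,t), ℒ_{i,t}} and −s(i,t)+𝒯'(i,t) = {k − s(i,t) : k ∈ 𝒯'(i,t)}. -/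

import Mathlib

open Matrix Finset

/-- The 2×2 polarization kernel `F = [[1,0],[1,1]]` over `𝔽₂`. -/
def polarF : Matrix (Fin 2) (Fin 2) (ZMod 2) := !![1, 0; 1, 1]

/-- The `n`-th Kronecker power `F^{⊗n}` of the polarization kernel, a `2^n × 2^n`
matrix over `𝔽₂`. -/
def kronPow : (n : ℕ) → Matrix (Fin (2 ^ n)) (Fin (2 ^ n)) (ZMod 2)
  | 0 => 1
  | n + 1 =>
      Matrix.reindex (finProdFinEquiv.trans (finCongr (by ring)))
        (finProdFinEquiv.trans (finCongr (by ring)))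
        (Matrix.kroneckerMap (· * ·) polarF (kronPow n))

/-- `s(i,t) = 2^t·⌊i/2^t⌋`, the first index of the length-`2^t` subgraph
containing position `i`. -/
def sIdx (i t : ℕ) : ℕ := 2 ^ t * (i / 2 ^ t)

/-- The `k`-th element of the index set `𝒯(i,t) = {s(i,t),…,s(i,t)+2^t−1}`,
as an element of `Fin (2^n)` (requires `t ≤ n`). -/
def subIdx (n t : ℕ) (ht : t ≤ n) (i : Fin (2 ^ n)) (k : Fin (2 ^ t)) : Fin (2 ^ n) :=
  ⟨sIdx (i : ℕ) t + (k : ℕ), by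
    have hk := k.isLt
    have h1 : (i : ℕ) / 2 ^ t < 2 ^ n / 2 ^ t :=
      Nat.div_lt_div_of_lt_of_dvd (pow_dvd_pow 2 ht) i.isLt
    have h2 : 2 ^ t * ((i : ℕ) / 2 ^ t + 1) ≤ 2 ^ t * (2 ^ n / 2 ^ t) :=
      Nat.mul_le_mul_left _ h1
    have h3 : 2 ^ t * (2 ^ n / 2 ^ t) = 2 ^ n :=
      Nat.mul_div_cancel' (pow_dvd_pow 2 ht)
    have h4 : 2 ^ t * ((i : ℕ) / 2 ^ t + 1) = 2 ^ t * ((i : ℕ) / 2 ^ t) + 2 ^ t := by ring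
    simp only [sIdx]
    omega⟩

/-!
Since `F ^ 2 = 1`, every Kronecker power `F^{⊗t}` is an involution, so
`x_i^{(t)} · F^{⊗t} = u_{𝒯(i,t)}` and the second summand collapses to
`Σ_{k ∈ 𝒯'(i,t)} u_k H_{k,j}`.  Together with the first summand this is the part of the
column sum `(u·H)_j = 0` over the rows `k < s(i,t) + 2^t`; the remaining rows lie below the
diagonal because `j ∈ 𝒯(i,t)`, so `H` vanishes there.
-/

lemma polarF_mul_self : polarF * polarF = 1 := by decide

lemma kronPow_mul_self (t : ℕ) : kronPow t * kronPow t = 1 := by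
  induction t with
  | zero => simp [kronPow]
  | succ t ih =>
    rw [kronPow, reindex_apply, submatrix_mul_equiv, ← mul_kronecker_mul, polarF_mul_self, ih,
      one_kronecker_one, submatrix_one_equiv]

lemma sum_mul_sum_eq_sum_vecMul_mul {m l R : Type*} [Fintype m] [NonUnitalSemiring R]
    (x : m → R) (A : Matrix m l R) (s : Finset l) (g : l → R) :
    ∑ r, x r * ∑ k ∈ s, A r k * g k = ∑ k ∈ s, (x ᵥ* A) k * g k := by
  simp only [vecMul, dotProduct, mul_sum, sum_mul, mul_assoc]
  exact sum_comm

@[simp]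
lemma coe_subIdx (n t : ℕ) (htn : t ≤ n) (i : Fin (2 ^ n)) (k : Fin (2 ^ t)) :
    (subIdx n t htn i k : ℕ) = sIdx i t + k := rfl

lemma sIdx_le (i t : ℕ) : sIdx i t ≤ i := Nat.mul_div_le i (2 ^ t)

lemma sum_filter_subIdx_eq {M : Type*} [AddCommMonoid M] (n t : ℕ) (htn : t ≤ n)
    (i : Fin (2 ^ n)) {a : ℕ} (ha : sIdx i t ≤ a) (g : Fin (2 ^ n) → M) :
    ∑ k ∈ univ.filter (fun k : Fin (2 ^ t) => a ≤ (subIdx n t htn i k : ℕ)),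
        g (subIdx n t htn i k)
      = ∑ k ∈ univ.filter (fun k : Fin (2 ^ n) => a ≤ (k : ℕ) ∧ (k : ℕ) < sIdx i t + 2 ^ t),
          g k := by
  refine sum_bij (fun k _ => subIdx n t htn i k) ?_ ?_ ?_ (fun _ _ => rfl)
  · intro k hk
    rw [mem_filter_univ, coe_subIdx] at hk ⊢
    exact ⟨hk, by omega⟩
  · intro k _ k' _ h
    simpa [Fin.ext_iff] using h
  · intro k hk
    rw [mem_filter_univ] at hk
    refine ⟨⟨k - sIdx i t, by omega⟩, ?_, Fin.ext ?_⟩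
    · rw [mem_filter_univ, coe_subIdx]
      dsimp only
      omega
    · rw [coe_subIdx]
      dsimp only
      omega

lemma sum_filter_lt_add_sum_filter_eq_zero_of_blockTriangular {N : ℕ} {R : Type*} [NonUnitalNonAssocSemiring R]
    {H : Matrix (Fin N) (Fin N) R} (hH : H.BlockTriangular id) {u : Fin N → R}
    (hu : u ᵥ* H = 0) {a b : ℕ} {j : Fin N} (hj : (j : ℕ) < b) :
    (∑ k ∈ univ.filter (fun k : Fin N => (k : ℕ) < a), u k * H k j)
      + ∑ k ∈ univ.filter (fun k : Fin N => a ≤ (k : ℕ) ∧ (k : ℕ) < b), u k * H k j = 0 := by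
  have htail : ∑ k ∈ univ.filter (fun k : Fin N => a ≤ (k : ℕ) ∧ (k : ℕ) < b), u k * H k j
      = ∑ k ∈ univ.filter (fun k : Fin N => ¬(k : ℕ) < a), u k * H k j := by
    refine sum_subset (fun k hk => by rw [mem_filter_univ] at hk ⊢; omega) fun k hk hkb => ?_
    simp only [mem_filter_univ, not_and, not_lt] at hk hkb
    have hbk := hkb hk
    rw [hH (show j < k by rw [Fin.lt_def]; omega), mul_zero]
  rw [htail, sum_filter_add_sum_filter_not]
  exact congrFun hu j

theorem subgraph_FC_conversion_general (n : ℕ) (H : Matrix (Fin (2 ^ n)) (Fin (2 ^ n)) (ZMod 2))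
    (hH : ∀ m j : Fin (2 ^ n), (j : ℕ) < (m : ℕ) → H m j = 0)
    (Ac : Finset (Fin (2 ^ n)))
    (u : Fin (2 ^ n) → ZMod 2) (hu : Matrix.vecMul u H = 0)
    (i : Fin (2 ^ n)) (t : ℕ) (htn : t ≤ n)
    (xt : Fin (2 ^ t) → ZMod 2)
    (hxt : xt = Matrix.vecMul (fun k => u (subIdx n t htn i k)) (kronPow t)) :
    ∀ j : Fin (2 ^ n), j ∈ Ac → (i : ℕ) ≤ (j : ℕ) →
      (sIdx (i : ℕ) t ≤ (j : ℕ) ∧ (j : ℕ) < sIdx (i : ℕ) t + 2 ^ t) →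
      ¬(sIdx (i : ℕ) (t - 1) ≤ (j : ℕ) ∧ (j : ℕ) < sIdx (i : ℕ) (t - 1) + 2 ^ (t - 1)) →
      (∑ k ∈ Finset.univ.filter (fun k : Fin (2 ^ n) => (k : ℕ) < (i : ℕ)), u k * H k j)
        + (∑ m : Fin (2 ^ t), xt m *
            ∑ k ∈ Finset.univ.filter
                (fun k : Fin (2 ^ t) => (i : ℕ) ≤ (subIdx n t htn i k : ℕ)),
              kronPow t m k * H (subIdx n t htn i k) j) = 0 := by
  intro j _ _ hjT _
  have hx : xt ᵥ* kronPow t = fun k => u (subIdx n t htn i k) := by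
    rw [hxt, vecMul_vecMul, kronPow_mul_self, vecMul_one]
  rw [sum_mul_sum_eq_sum_vecMul_mul, hx,
    sum_filter_subIdx_eq n t htn i (sIdx_le i t) (fun k => u k * H k j)]
  exact sum_filter_lt_add_sum_filter_eq_zero_of_blockTriangular hH hu hjT.2

/-- **Theorem 3 (subgraph-based FC conversion).**  Let `N = 2^n`, let `H` be an
`N × N` upper-triangular matrix over `𝔽₂`, and `Ac ⊆ {0,…,N−1}` the constrained
positions.  Suppose `u·H = 0`.  Fix `i` and `t ∈ {1,…,n}`, and let
`x_i^{(t)} = u_{𝒯(i,t)}·F^{⊗t}` (the subvector of `u` on `𝒯(i,t)`, encoded by the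
length-`2^t` polar kernel power).  Then for every `j ∈ ℒ_{i,t}`, i.e. every
`j ∈ Ac` with `j ≥ i`, `j ∈ 𝒯(i,t)` and `j ∉ 𝒯(i,t−1)`:
`(u_0^{i−1}·H_{0:i−1,ℒ_{i,t}})_j + (x_i^{(t)}·Q^{(i,t)})_j = 0`, where
`Q^{(i,t)} = (F^{⊗t})_{*,−s(i,t)+𝒯'(i,t)}·H_{𝒯'(i,t),ℒ_{i,t}}` and
`𝒯'(i,t) = 𝒯(i,t) ∩ {i,…,N−1}`; entrywise the `j`-th coordinate reads
`Σ_{k<i} u_k·H_{k,j} + Σ_{m<2^t} x_i^{(t)}_m · (Σ_{k'<2^t, s(i,t)+k' ≥ i}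
(F^{⊗t})_{m,k'}·H_{s(i,t)+k',j}) = 0`. -/
theorem subgraph_FC_conversion (n : ℕ) (H : Matrix (Fin (2 ^ n)) (Fin (2 ^ n)) (ZMod 2))
    (hH : ∀ m j : Fin (2 ^ n), (j : ℕ) < (m : ℕ) → H m j = 0)
    (Ac : Finset (Fin (2 ^ n)))
    (u : Fin (2 ^ n) → ZMod 2) (hu : Matrix.vecMul u H = 0)
    (i : Fin (2 ^ n)) (t : ℕ) (ht1 : 1 ≤ t) (htn : t ≤ n)
    (xt : Fin (2 ^ t) → ZMod 2)
    (hxt : xt = Matrix.vecMul (fun k => u (subIdx n t htn i k)) (kronPow t)) :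
    ∀ j : Fin (2 ^ n), j ∈ Ac → (i : ℕ) ≤ (j : ℕ) →
      (sIdx (i : ℕ) t ≤ (j : ℕ) ∧ (j : ℕ) < sIdx (i : ℕ) t + 2 ^ t) →
      ¬(sIdx (i : ℕ) (t - 1) ≤ (j : ℕ) ∧ (j : ℕ) < sIdx (i : ℕ) (t - 1) + 2 ^ (t - 1)) →
      (∑ k ∈ Finset.univ.filter (fun k : Fin (2 ^ n) => (k : ℕ) < (i : ℕ)), u k * H k j)
        + (∑ m : Fin (2 ^ t), xt m *
            ∑ k ∈ Finset.univ.filter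
                (fun k : Fin (2 ^ t) => (i : ℕ) ≤ (subIdx n t htn i k : ℕ)),
              kronPow t m k * H (subIdx n t htn i k) j) = 0 :=
  subgraph_FC_conversion_general n H hH Ac u hu i t htn xt hxt
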